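/- Let φ ∈ ℂ² with φ ≠ 0 and let A : ℝ³ → ℝ³ be a real linear map. Suppose (i) ∑_{i=1}^{3} e_i·((A e_i)·φ) = 0, and (ii) Re⟨φ, X·((A Y)·φ) + Y·((A X)·φ)⟩ = 0 for all X, Y ∈ ℝ³. Then A = 0. -/

import Mathlib

/-- Clifford multiplication of a vector `X ∈ ℝ³` on a spinor `φ ∈ ℂ²`, given by
`X · φ = -i (X₁σ₁ + X₂σ₂ + X₃σ₃) φ` where `σ₁, σ₂, σ₃` are the Pauli matrices. -/
noncomputable def cliffordMul (X : EuclideanSpace ℝ (Fin 3)) (φ : EuclideanSpace ℂ (Fin 2)) :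
    EuclideanSpace ℂ (Fin 2) :=
  (WithLp.equiv 2 (Fin 2 → ℂ)).symm
    ![-Complex.I * ((X 2 : ℂ) * φ 0 + ((X 0 : ℂ) - Complex.I * (X 1 : ℂ)) * φ 1),
      -Complex.I * (((X 0 : ℂ) + Complex.I * (X 1 : ℂ)) * φ 0 - (X 2 : ℂ) * φ 1)]

/-- The standard orthonormal basis vector `e_j` of `ℝ³`. -/
noncomputable def stdVec (j : Fin 3) : EuclideanSpace ℝ (Fin 3) :=
  EuclideanSpace.single j 1

/-!
The Clifford product of two vectors is `X·Y·φ = -⟪X, Y⟫ φ + (X × Y)·φ`, and vectors act by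
skew-Hermitian matrices, so `Re ⟨φ, X·Y·φ⟩ = -⟪X, Y⟫ ‖φ‖²`. Hence condition (ii) says that `A` is
skew-symmetric. Summing the same product formula over the standard basis gives
`∑ eᵢ·(A eᵢ)·φ = (curl A)·φ - (tr A) φ`; the trace of a skew-symmetric map vanishes, so condition (i)
says `(curl A)·φ = 0`. Since `w·w·φ = -‖w‖² φ`, this forces `curl A = 0`, and a skew-symmetric map
of `ℝ³` with zero curl is zero.
-/

open scoped RealInnerProductSpace

section CliffordMul

variable (X Y : EuclideanSpace ℝ (Fin 3)) (φ : EuclideanSpace ℂ (Fin 2))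

theorem cliffordMul_apply_zero :
    cliffordMul X φ 0 = -Complex.I * (X 2 * φ 0 + (X 0 - Complex.I * X 1) * φ 1) := rfl

theorem cliffordMul_apply_one :
    cliffordMul X φ 1 = -Complex.I * ((X 0 + Complex.I * X 1) * φ 0 - X 2 * φ 1) := rfl

theorem cliffordMul_zero : cliffordMul X 0 = 0 := by
  ext i
  fin_cases i <;> simp [cliffordMul]

theorem cliffordMul_cliffordMul_self :
    cliffordMul X (cliffordMul X φ) = -((‖X‖ ^ 2 : ℝ) : ℂ) • φ := by
  refine PiLp.ext (Fin.forall_fin_two.mpr ⟨?_, ?_⟩) <;>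
  · simp only [cliffordMul_apply_zero, cliffordMul_apply_one, EuclideanSpace.real_norm_sq_eq,
      Fin.sum_univ_three, PiLp.smul_apply, smul_eq_mul]
    push_cast
    ring_nf
    simp only [Complex.I_sq, Complex.I_pow_four]
    ring

theorem re_inner_cliffordMul_cliffordMul :
    (inner ℂ φ (cliffordMul X (cliffordMul Y φ))).re = -⟪X, Y⟫ * ‖φ‖ ^ 2 := by
  simp only [EuclideanSpace.norm_sq_eq, PiLp.inner_apply, Fin.sum_univ_two, Fin.sum_univ_three,
    cliffordMul_apply_zero, cliffordMul_apply_one, RCLike.inner_apply, Complex.sq_norm,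
    Complex.normSq_apply, Complex.add_re, Complex.sub_re, Complex.neg_re, Complex.mul_re, Complex.add_im,
    Complex.sub_im, Complex.neg_im, Complex.mul_im, Complex.I_re, Complex.I_im, Complex.ofReal_re,
    Complex.ofReal_im, Complex.conj_re, Complex.conj_im, Real.ringHom_apply]
  ring

end CliffordMul

theorem eq_zero_of_cliffordMul_eq_zero {X : EuclideanSpace ℝ (Fin 3)}
    {φ : EuclideanSpace ℂ (Fin 2)} (hX : cliffordMul X φ = 0) (hφ : φ ≠ 0) : X = 0 := by
  have h := cliffordMul_cliffordMul_self X φ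
  rw [hX, cliffordMul_zero, eq_comm, smul_eq_zero] at h
  simpa [hφ] using h

theorem LinearMap.trace_eq_zero_of_forall_inner_apply_self {E : Type*} [NormedAddCommGroup E]
    [InnerProductSpace ℝ E] [FiniteDimensional ℝ E] (A : E →ₗ[ℝ] E)
    (hA : ∀ X, ⟪X, A X⟫ = 0) : A.trace ℝ E = 0 := by
  simp [LinearMap.trace_eq_sum_inner A (stdOrthonormalBasis ℝ E), hA]

section Curl

variable (A : EuclideanSpace ℝ (Fin 3) →ₗ[ℝ] EuclideanSpace ℝ (Fin 3))

/-- The curl of the linear vector field `x ↦ A x`, whose partial derivatives are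
`∂ⱼ (A x)ᵢ = A eⱼ i`. -/
noncomputable def curl : EuclideanSpace ℝ (Fin 3) :=
  !₂[A (stdVec 1) 2 - A (stdVec 2) 1, A (stdVec 2) 0 - A (stdVec 0) 2,
    A (stdVec 0) 1 - A (stdVec 1) 0]

theorem trace_eq_sum_stdVec : A.trace ℝ _ = ∑ i, A (stdVec i) i := by
  simp [LinearMap.trace_eq_sum_inner A (EuclideanSpace.basisFun (Fin 3) ℝ), stdVec,
    EuclideanSpace.inner_single_left]

theorem sum_cliffordMul_stdVec_cliffordMul (φ : EuclideanSpace ℂ (Fin 2)) :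
    ∑ i, cliffordMul (stdVec i) (cliffordMul (A (stdVec i)) φ)
      = cliffordMul (curl A) φ - ((A.trace ℝ _ : ℝ) : ℂ) • φ := by
  rw [trace_eq_sum_stdVec]
  refine PiLp.ext (Fin.forall_fin_two.mpr ⟨?_, ?_⟩) <;>
  · simp only [Fin.sum_univ_three, PiLp.add_apply, PiLp.sub_apply, PiLp.smul_apply, smul_eq_mul,
      cliffordMul_apply_zero, cliffordMul_apply_one, stdVec, PiLp.single_apply,
      curl, Matrix.cons_val_zero, Matrix.cons_val_one, Matrix.cons_val_two,
      Matrix.head_cons, Matrix.tail_cons]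
    push_cast
    ring_nf
    simp only [Complex.I_sq, Complex.I_pow_three, Complex.I_pow_four]
    ring

theorem eq_zero_of_skew_of_curl_eq_zero (hA : ∀ X Y, ⟪X, A Y⟫ + ⟪Y, A X⟫ = 0)
    (hcurl : curl A = 0) : A = 0 := by
  have hskew : ∀ i j, A (stdVec j) i + A (stdVec i) j = 0 := fun i j => by
    simpa [stdVec, EuclideanSpace.inner_single_left] using hA (stdVec i) (stdVec j)
  have h0 : A (stdVec 1) 2 - A (stdVec 2) 1 = 0 := congrArg (· 0) hcurl
  have h1 : A (stdVec 2) 0 - A (stdVec 0) 2 = 0 := congrArg (· 1) hcurl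
  have h2 : A (stdVec 0) 1 - A (stdVec 1) 0 = 0 := congrArg (· 2) hcurl
  refine (EuclideanSpace.basisFun (Fin 3) ℝ).toBasis.ext fun j => ?_
  ext i
  rw [OrthonormalBasis.coe_toBasis, EuclideanSpace.basisFun_apply, LinearMap.zero_apply,
    PiLp.zero_apply]
  change A (stdVec j) i = 0
  fin_cases i <;> fin_cases j <;> simp only [Fin.zero_eta, Fin.mk_one, Fin.reduceFinMk] <;>
    linarith [hskew 0 0, hskew 1 1, hskew 2 2, hskew 0 1, hskew 0 2, hskew 1 2, h0, h1, h2]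

end Curl

theorem dirac_eq_and_energy_momentum_zero_implies_parallel
    (φ : EuclideanSpace ℂ (Fin 2)) (hφ : φ ≠ 0)
    (A : EuclideanSpace ℝ (Fin 3) →ₗ[ℝ] EuclideanSpace ℝ (Fin 3))
    (hD : ∑ i : Fin 3, cliffordMul (stdVec i) (cliffordMul (A (stdVec i)) φ) = 0)
    (hQ : ∀ X Y : EuclideanSpace ℝ (Fin 3),
      (inner ℂ φ (cliffordMul X (cliffordMul (A Y) φ)
        + cliffordMul Y (cliffordMul (A X) φ)) : ℂ).re = 0) :
    A = 0 := by
  have hφ_sq : ‖φ‖ ^ 2 ≠ 0 := pow_ne_zero 2 (norm_ne_zero_iff.mpr hφ)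
  have hskew : ∀ X Y, ⟪X, A Y⟫ + ⟪Y, A X⟫ = 0 := fun X Y => by
    have h := hQ X Y
    rw [inner_add_right, Complex.add_re, re_inner_cliffordMul_cliffordMul,
      re_inner_cliffordMul_cliffordMul] at h
    exact (mul_eq_zero.mp (by linear_combination -h)).resolve_right hφ_sq
  have htrace : A.trace ℝ _ = 0 :=
    A.trace_eq_zero_of_forall_inner_apply_self fun X => by linarith [hskew X X]
  rw [sum_cliffordMul_stdVec_cliffordMul, htrace, Complex.ofReal_zero, zero_smul, sub_zero] at hD
  exact eq_zero_of_skew_of_curl_eq_zero A hskew (eq_zero_of_cliffordMul_eq_zero hD hφ)
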